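/- arXiv:math/0504222 — 2 statements merged into one kernel-verified Lean document; each statement's English description precedes it below -/
import Mathlib

section
/- Let x ∈ ℤ^m with x₁ ≤ … ≤ x_m and y ∈ (ℤ + 1/2)^n with y₁ ≤ … ≤ y_n. Suppose x' is obtained from x by adding 1 to all coordinates x_{i'} with x_{i'} = c (for a fixed value c ∈ ℤ appearing among the coordinates of x) and leaving the others unchanged, and y' is obtained from y by subtracting 1 from all coordinates y_{j'} with y_{j'} = c + 1/2 (assumed to appear among the coordinates of y) and leaving the others unchanged. Then for all 1 ≤ i' ≤ m and 1 ≤ j' ≤ n−1: 1{x'_{i'} ∈ (y_{j'}, y_{j'+1}]} = 1{x_{i'} ∈ (y'_{j'}, y'_{j'+1}]}. -/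
/-- Membership of an integer in a half-open interval with half-integer endpoints,
reduced to integer inequalities. -/
lemma mem_Ioc_half (a b z : ℤ) :
    (z : ℝ) ∈ Set.Ioc ((a : ℝ) + 1 / 2) ((b : ℝ) + 1 / 2) ↔ a < z ∧ z ≤ b := by
  rw [Set.mem_Ioc]
  constructor
  · rintro ⟨h1, h2⟩
    constructor
    · exact_mod_cast (show (a : ℝ) < z by linarith)
    · have h3 : (z : ℝ) < (b : ℝ) + 1 := by linarith
      have h4 : z < b + 1 := by exact_mod_cast h3
      omega
  · rintro ⟨h1, h2⟩
    constructor
    · have : (a : ℝ) + 1 ≤ z := by exact_mod_cast (show a + 1 ≤ z by omega)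
      linarith
    · have : (z : ℝ) ≤ b := by exact_mod_cast h2
      linarith

/-- Balls-in-boxes identity: moving all balls at integer site `c` one step to the right
while moving all box boundaries at `c + 1/2` one step to the left leaves all the
box-occupancy indicators unchanged. -/
theorem stmt_5 (m n : ℕ) (x : Fin m → ℤ) (y : Fin n → ℝ)
    (hx : Monotone x) (hy : Monotone y)
    (hy' : ∀ j, ∃ k : ℤ, y j = (k : ℝ) + 1 / 2)
    (c : ℤ) (hc : ∃ i, x i = c) (hc' : ∃ j, y j = (c : ℝ) + 1 / 2)
    (x' : Fin m → ℤ) (hx' : ∀ i, x' i = if x i = c then x i + 1 else x i)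
    (y' : Fin n → ℝ) (hy'' : ∀ j, y' j = if y j = (c : ℝ) + 1 / 2 then y j - 1 else y j) :
    ∀ (i : Fin m) (j : Fin n) (hj : (j : ℕ) + 1 < n),
      ((x' i : ℝ) ∈ Set.Ioc (y j) (y ⟨(j : ℕ) + 1, hj⟩)
        ↔ (x i : ℝ) ∈ Set.Ioc (y' j) (y' ⟨(j : ℕ) + 1, hj⟩)) := by
  intro i j hj
  obtain ⟨p, hp⟩ := hy' j
  obtain ⟨q, hq⟩ := hy' ⟨(j : ℕ) + 1, hj⟩
  -- express y' j and y' (j+1) as half-integers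
  have hyj' : y' j = ((if p = c then p - 1 else p : ℤ) : ℝ) + 1 / 2 := by
    rw [hy'' j, hp]
    by_cases h : p = c
    · rw [if_pos h, if_pos (by rw [h])]; push_cast; ring
    · rw [if_neg h, if_neg]
      intro hh
      apply h
      have : (p : ℝ) = (c : ℝ) := by linarith
      exact_mod_cast this
  have hyj1' : y' ⟨(j : ℕ) + 1, hj⟩ = ((if q = c then q - 1 else q : ℤ) : ℝ) + 1 / 2 := by
    rw [hy'' ⟨(j : ℕ) + 1, hj⟩, hq]
    by_cases h : q = c
    · rw [if_pos h, if_pos (by rw [h])]; push_cast; ring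
    · rw [if_neg h, if_neg]
      intro hh
      apply h
      have : (q : ℝ) = (c : ℝ) := by linarith
      exact_mod_cast this
  rw [hp, hq, hyj', hyj1', mem_Ioc_half, mem_Ioc_half, hx' i]
  split_ifs <;> omega
end

section
/- Let T₁, …, T_m be independent random variables with P{T_i ≤ t} = exp(−2a_i/(γt)), a_i > 0, γ > 0, and let T = max_i T_i. Then conditionally on the event {T = T_i}, T has the same distribution as unconditionally: P{T ≤ t | T = T_i} = exp(−2a/(γt)) where a = Σ_k a_k. -/
/-!
Put `c_k = 2 a_k / γ`, so that `T_k` has CDF `exp (-c_k / x)` on `(0, ∞)` and hence density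
`c_k x⁻² exp (-c_k / x)`. The vector `(T_k)_{k ≠ i}` is independent of `T_i`, and by independence
`P (T_k ≤ x for all k ≠ i) = exp (-d / x)` with `d = ∑_{k ≠ i} c_k`. Therefore
`P (T ≤ t, T = T_i) = ∫₀ᵗ exp (-d / x) c_i x⁻² exp (-c_i / x) dx`, and the integrand is
`c_i / (c_i + d)` times the density of the law with CDF `exp (-(c_i + d) / x)`.
-/

open MeasureTheory ProbabilityTheory Real Set

lemma hasDerivAt_exp_neg_div (c : ℝ) {x : ℝ} (hx : x ≠ 0) :
    HasDerivAt (fun y => exp (-c / y)) (c / x ^ 2 * exp (-c / x)) x := by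
  have h := ((hasDerivAt_inv hx).const_mul (-c)).exp
  simp only [← div_eq_mul_inv] at h
  convert h using 1
  field_simp

lemma lintegral_Ioc_div_sq_mul_exp_neg_div {c t : ℝ} (hc : 0 < c) (ht : 0 < t) :
    ∫⁻ x in Ioc 0 t, ENNReal.ofReal (c / x ^ 2 * exp (-c / x)) = ENNReal.ofReal (exp (-c / t)) := by
  -- `expNegInvGlue (x / c)` is `exp (-c / x)` extended continuously by `0` to `x ≤ 0`.
  set F : ℝ → ℝ := fun x => expNegInvGlue (x / c)
  have hF : ∀ x, 0 < x → F x = exp (-c / x) := fun x hx => by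
    simp [F, expNegInvGlue, not_le.mpr (div_pos hx hc), neg_div]
  have hcont : ContinuousOn F (Icc 0 t) :=
    (expNegInvGlue.contDiff (n := 0).continuous.comp (continuous_id.div_const c)).continuousOn
  have hderiv : ∀ x ∈ Ioo 0 t, HasDerivAt F (c / x ^ 2 * exp (-c / x)) x := fun x hx =>
    (hasDerivAt_exp_neg_div c hx.1.ne').congr_of_eventuallyEq
      (Filter.eventually_of_mem (Ioi_mem_nhds hx.1) hF)
  have hnonneg : ∀ x, 0 ≤ c / x ^ 2 * exp (-c / x) := fun x => by positivity
  have hint := intervalIntegral.integrableOn_deriv_of_nonneg hcont hderiv fun x _ => hnonneg x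
  rw [← ofReal_integral_eq_lintegral_ofReal hint (Filter.Eventually.of_forall hnonneg),
    ← intervalIntegral.integral_of_le ht.le,
    intervalIntegral.integral_eq_sub_of_hasDerivAt_of_le ht.le hcont hderiv
      ((intervalIntegrable_iff_integrableOn_Ioc_of_le ht.le).mpr hint),
    hF t ht, show F 0 = 0 by simp [F], sub_zero]

lemma eq_withDensity_of_cdf_eq_exp_neg_div {c : ℝ} (hc : 0 < c) {ν : Measure ℝ}
    [IsFiniteMeasure ν] (h0 : ν (Iic 0) = 0)
    (hcdf : ∀ x, 0 < x → ν (Iic x) = ENNReal.ofReal (exp (-c / x))) :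
    ν = volume.withDensity
      ((Ioi 0).indicator fun x => ENNReal.ofReal (c / x ^ 2 * exp (-c / x))) := by
  refine Measure.ext_of_Iic _ _ fun x => ?_
  rw [withDensity_apply _ measurableSet_Iic, lintegral_indicator measurableSet_Ioi,
    Measure.restrict_restrict measurableSet_Ioi, Ioi_inter_Iic]
  rcases le_or_gt x 0 with hx | hx
  · rw [Ioc_eq_empty hx.not_gt, Measure.restrict_empty, lintegral_zero_measure]
    exact measure_mono_null (Iic_subset_Iic.mpr hx) h0
  · rw [lintegral_Ioc_div_sq_mul_exp_neg_div hc hx, hcdf x hx]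

lemma setLIntegral_Iic_exp_neg_div {c d t : ℝ} (hc : 0 < c) (hd : 0 ≤ d) (ht : 0 < t)
    {ν : Measure ℝ} [IsFiniteMeasure ν] (h0 : ν (Iic 0) = 0)
    (hcdf : ∀ x, 0 < x → ν (Iic x) = ENNReal.ofReal (exp (-c / x)))
    {G : ℝ → ENNReal} (hG : ∀ x, 0 < x → G x = ENNReal.ofReal (exp (-d / x))) :
    ∫⁻ x in Iic t, G x ∂ν = ENNReal.ofReal (c / (c + d) * exp (-(c + d) / t)) := by
  have hcd : 0 < c + d := by linarith
  rw [← Iic_union_Ioc_eq_Iic ht.le, lintegral_union measurableSet_Ioc (Iic_disjoint_Ioc le_rfl),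
    setLIntegral_measure_zero _ _ h0, zero_add,
    setLIntegral_congr_fun measurableSet_Ioc fun x hx => hG x hx.1,
    eq_withDensity_of_cdf_eq_exp_neg_div hc h0 hcdf,
    setLIntegral_withDensity_eq_lintegral_mul₀'
      ((by fun_prop : Measurable _).indicator measurableSet_Ioi).aemeasurable (by fun_prop)
      measurableSet_Ioc]
  have hdensity : ∀ x ∈ Ioc 0 t,
      ((Ioi 0).indicator (fun x => ENNReal.ofReal (c / x ^ 2 * exp (-c / x))) *
        fun x => ENNReal.ofReal (exp (-d / x))) x
      = ENNReal.ofReal (c / (c + d)) * ENNReal.ofReal ((c + d) / x ^ 2 * exp (-(c + d) / x)) := by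
    rintro x ⟨hx, -⟩
    rw [Pi.mul_apply, indicator_of_mem (mem_Ioi.mpr hx), ← ENNReal.ofReal_mul (by positivity),
      ← ENNReal.ofReal_mul (by positivity), show -(c + d) / x = -c / x + -d / x by ring, exp_add]
    congr 1
    field_simp
  rw [setLIntegral_congr_fun measurableSet_Ioc hdensity, lintegral_const_mul _ (by fun_prop),
    lintegral_Ioc_div_sq_mul_exp_neg_div hcd ht, ← ENNReal.ofReal_mul (by positivity)]

namespace ProbabilityTheory

variable {Ω : Type*} [MeasurableSpace Ω] {μ : Measure Ω}

lemma iIndepFun.indepFun_restrict_of_notMem {ι β : Type*} [MeasurableSpace β] {T : ι → Ω → β}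
    (hT : iIndepFun T μ) (hTm : ∀ i, Measurable (T i)) {i : ι} {s : Finset ι} (hi : i ∉ s) :
    IndepFun (T i) (fun ω (k : s) => T k ω) μ :=
  (hT.indepFun_finset {i} s (Finset.disjoint_singleton_left.mpr hi) hTm).comp
    (measurable_pi_apply (⟨i, Finset.mem_singleton_self i⟩ : ({i} : Finset ι))) measurable_id

lemma iIndepFun.measure_forall_le_eq_exp {ι : Type*} {T : ι → Ω → ℝ} (hT : iIndepFun T μ)
    {c : ι → ℝ} {x : ℝ} (hcdf : ∀ k, μ {ω | T k ω ≤ x} = ENNReal.ofReal (exp (-c k / x)))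
    (s : Finset ι) :
    μ {ω | ∀ k : s, T k ω ≤ x} = ENNReal.ofReal (exp (-(∑ k ∈ s, c k) / x)) := by
  have hset : {ω | ∀ k : s, T k ω ≤ x} = ⋂ k ∈ s, T k ⁻¹' Iic x := by ext; simp
  rw [hset, hT.measure_inter_preimage_eq_mul s fun _ _ => measurableSet_Iic]
  simp only [preimage, mem_Iic, hcdf]
  rw [← ENNReal.ofReal_prod_of_nonneg fun _ _ => (exp_pos _).le, ← exp_sum, ← Finset.sum_div,
    Finset.sum_neg_distrib]

lemma IndepFun.measure_le_and_forall_le_eq_lintegral [IsFiniteMeasure μ] {ι : Type*}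
    [Countable ι] {X : Ω → ℝ} {Y : Ω → ι → ℝ} (hXY : IndepFun X Y μ) (hX : Measurable X)
    (hY : Measurable Y) (t : ℝ) :
    μ {ω | X ω ≤ t ∧ ∀ k, Y ω k ≤ X ω} = ∫⁻ x in Iic t, μ {ω | ∀ k, Y ω k ≤ x} ∂μ.map X := by
  set S : Set (ℝ × (ι → ℝ)) := {p | p.1 ≤ t ∧ ∀ k, p.2 k ≤ p.1}
  have hS : MeasurableSet S := by measurability
  rw [show {ω | X ω ≤ t ∧ ∀ k, Y ω k ≤ X ω} = (fun ω => (X ω, Y ω)) ⁻¹' S from rfl,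
    ← Measure.map_apply (hX.prodMk hY) hS,
    (indepFun_iff_map_prod_eq_prod_map_map hX.aemeasurable hY.aemeasurable).mp hXY,
    Measure.prod_apply hS, ← lintegral_indicator measurableSet_Iic]
  refine lintegral_congr fun x => ?_
  by_cases hx : x ≤ t
  · have hsection : Prod.mk x ⁻¹' S = {y | ∀ k, y k ≤ x} := by ext; simp [S, hx]
    rw [hsection, indicator_of_mem (mem_Iic.mpr hx), Measure.map_apply hY (by measurability)]
    rfl
  · have hsection : Prod.mk x ⁻¹' S = ∅ := by ext; simp [S, hx]
    rw [hsection, measure_empty, indicator_of_notMem (by simpa using hx)]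

lemma iIndepFun.measure_forall_le_inter_forall_le_eq_lintegral [IsFiniteMeasure μ]
    {ι : Type*} [Fintype ι] [DecidableEq ι] {T : ι → Ω → ℝ} (hT : iIndepFun T μ)
    (hTm : ∀ i, Measurable (T i)) (i : ι) (t : ℝ) :
    μ ({ω | ∀ k, T k ω ≤ t} ∩ {ω | ∀ k, T k ω ≤ T i ω})
      = ∫⁻ x in Iic t, μ {ω | ∀ k : Finset.univ.erase i, T k ω ≤ x} ∂μ.map (T i) := by
  have hevent : {ω | ∀ k, T k ω ≤ t} ∩ {ω | ∀ k, T k ω ≤ T i ω}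
      = {ω | T i ω ≤ t ∧ ∀ k : Finset.univ.erase i, T k ω ≤ T i ω} := by
    ext ω
    simp only [mem_inter_iff, mem_ofPred_eq, Finset.mem_erase, Finset.mem_univ, and_true,
      Subtype.forall]
    constructor
    · rintro ⟨hle, hmax⟩
      exact ⟨hle i, fun k _ => hmax k⟩
    · rintro ⟨hle, hmax⟩
      have hmax' : ∀ k, T k ω ≤ T i ω := fun k => by
        rcases eq_or_ne k i with rfl | hk
        exacts [le_rfl, hmax k hk]
      exact ⟨fun k => (hmax' k).trans hle, hmax'⟩
  rw [hevent, IndepFun.measure_le_and_forall_le_eq_lintegral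
    (hT.indepFun_restrict_of_notMem hTm (Finset.notMem_erase i _)) (hTm i)
    (measurable_pi_lambda _ fun k => hTm k) t]

end ProbabilityTheory

theorem stmt_12_general {Ω : Type*} [MeasurableSpace Ω] (μ : Measure Ω) [IsProbabilityMeasure μ]
    (m : ℕ) (T : Fin m → Ω → ℝ) (hTm : ∀ i, Measurable (T i))
    (hTpos : ∀ i ω, 0 < T i ω)
    (hindep : iIndepFun T μ)
    (a : Fin m → ℝ) (ha : ∀ i, 0 < a i) (γ : ℝ) (hγ : 0 < γ)
    (hcdf : ∀ i, ∀ t : ℝ, 0 < t →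
      μ {ω | T i ω ≤ t} = ENNReal.ofReal (Real.exp (-(2 * a i) / (γ * t)))) :
    ∀ i : Fin m, ∀ t : ℝ, 0 < t →
      μ ({ω | ∀ k, T k ω ≤ t} ∩ {ω | ∀ k, T k ω ≤ T i ω})
        = ENNReal.ofReal ((a i / ∑ k, a k) * Real.exp (-(2 * ∑ k, a k) / (γ * t))) := by
  intro i t ht
  set c : Fin m → ℝ := fun k => 2 * a k / γ
  have hc : ∀ k, 0 < c k := fun k => div_pos (mul_pos two_pos (ha k)) hγ
  have hcdf' : ∀ k x, 0 < x → μ {ω | T k ω ≤ x} = ENNReal.ofReal (exp (-c k / x)) :=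
    fun k x hx => by rw [hcdf k x hx, show -(2 * a k) / (γ * x) = -c k / x by simp only [c]; ring]
  have hlaw0 : μ.map (T i) (Iic 0) = 0 := by
    rw [Measure.map_apply (hTm i) measurableSet_Iic]
    convert measure_empty (μ := μ)
    exact eq_empty_of_forall_notMem fun ω hω => (hTpos i ω).not_ge hω
  have hlaw : ∀ x, 0 < x → μ.map (T i) (Iic x) = ENNReal.ofReal (exp (-c i / x)) :=
    fun x hx => by rw [Measure.map_apply (hTm i) measurableSet_Iic]; exact hcdf' i x hx
  have hsum : c i + ∑ k ∈ Finset.univ.erase i, c k = 2 * (∑ k, a k) / γ := by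
    rw [Finset.add_sum_erase _ _ (Finset.mem_univ i)]
    simp only [c, ← Finset.sum_div, ← Finset.mul_sum]
  rw [hindep.measure_forall_le_inter_forall_le_eq_lintegral hTm i t,
    setLIntegral_Iic_exp_neg_div (hc i) (Finset.sum_nonneg fun k _ => (hc k).le) ht hlaw0 hlaw
      fun x hx => hindep.measure_forall_le_eq_exp (fun k => hcdf' k x hx) _, hsum]
  have hA : 0 < ∑ k, a k := Finset.sum_pos (fun k _ => ha k) ⟨i, Finset.mem_univ i⟩
  congr 2
  · simp only [c]; field_simp
  · congr 1; field_simp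

/-- Conditionally on the maximum being attained at index `i`, the maximum `T = max_k T_k`
has its unconditional distribution:
`P({T ≤ t} ∩ {T = T_i}) = (a_i/a) · exp(-2a/(γt))` with `a = Σ_k a_k`. -/
theorem stmt_12 {Ω : Type*} [MeasurableSpace Ω] (μ : Measure Ω) [IsProbabilityMeasure μ]
    (m : ℕ) (hm : 0 < m) (T : Fin m → Ω → ℝ) (hTm : ∀ i, Measurable (T i))
    (hTpos : ∀ i ω, 0 < T i ω)
    (hindep : iIndepFun T μ)
    (a : Fin m → ℝ) (ha : ∀ i, 0 < a i) (γ : ℝ) (hγ : 0 < γ)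
    (hcdf : ∀ i, ∀ t : ℝ, 0 < t →
      μ {ω | T i ω ≤ t} = ENNReal.ofReal (Real.exp (-(2 * a i) / (γ * t))))
    (hdistinct : ∀ᵐ ω ∂μ, ∀ i j : Fin m, i ≠ j → T i ω ≠ T j ω) :
    ∀ i : Fin m, ∀ t : ℝ, 0 < t →
      μ ({ω | ∀ k, T k ω ≤ t} ∩ {ω | ∀ k, T k ω ≤ T i ω})
        = ENNReal.ofReal ((a i / ∑ k, a k) * Real.exp (-(2 * ∑ k, a k) / (γ * t))) :=
  stmt_12_general μ m T hTm hTpos hindep a ha γ hγ hcdf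
end
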